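/- If w̃ : D^n(δ) → D^n(δ) is the δ-roundoff of a contraction w : ℝ^n → ℝ^n with respect to the metric d, with contraction factor λ ∈ [0, 1) and fixed point x_f, then the minimal absorbing set M[w̃] (in the whole space D^n(δ)) exists; moreover M[w̃] is finite and its cardinality is at most the cardinality of Λ(x_f, r_0) = {ỹ ∈ D^n(δ) : d(ỹ, x_f) ≤ θ(1 − λ)^{−1}}. -/

import Mathlib

open Set

noncomputable section

/-- The δ-discretization of ℝⁿ: the set of centers of the cubes of the δ-grid. -/
def Dgrid (n : ℕ) (δ : ℝ) : Set (Fin n → ℝ) :=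
  {x | ∃ m : Fin n → ℤ, x = fun j => δ * (m j : ℝ)}

/-- The δ-roundoff of a point `x ∈ ℝⁿ`. -/
def roundPt (n : ℕ) (δ : ℝ) (x : Fin n → ℝ) : Fin n → ℝ :=
  fun j => δ * (⌊x j / δ + 1 / 2⌋ : ℤ)

/-- The δ-roundoff of a mapping `w : ℝⁿ → ℝⁿ`. -/
def roundMap (n : ℕ) (δ : ℝ) (w : (Fin n → ℝ) → (Fin n → ℝ)) :
    (Fin n → ℝ) → (Fin n → ℝ) :=
  fun x => roundPt n δ (w x)

/-- `Λ` is an absorbing set for `w` in `C`. -/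
def IsAbsorbing {X : Type*} (w : X → X) (C Λ : Set X) : Prop :=
  Λ ⊆ C ∧ ∀ x ∈ C, ∃ N : ℕ, ∀ i ≥ N, w^[i] x ∈ Λ

/-- The intersection of all absorbing sets for `w` in `C`; it is called the
minimal absorbing set `M[w, C]` when it is itself absorbing in `C`. -/
def minAbsorbing {X : Type*} (w : X → X) (C : Set X) : Set X :=
  ⋂₀ {Λ | IsAbsorbing w C Λ}

/-- The diameter of a δ-cube with respect to the norm `nrm`; `θ` is half this value. -/
def cubeDiam (n : ℕ) (δ : ℝ) (nrm : (Fin n → ℝ) → ℝ) : ℝ :=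
  sSup {r | ∃ x y : Fin n → ℝ,
    (∀ j, -(δ / 2) ≤ x j ∧ x j < δ / 2) ∧
    (∀ j, -(δ / 2) ≤ y j ∧ y j < δ / 2) ∧ r = nrm (x - y)}

/-! Rounding moves a point by at most `θ`, so `V x = d(x, x_f)` satisfies
`V (w̃ x) ≤ θ + λ V x`, i.e. `V - r₀` shrinks by the factor `λ` along orbits, where
`r₀ = θ (1 - λ)⁻¹`. Hence every orbit of `w̃` stays in a bounded, and therefore finite, set of
grid points and is eventually periodic; the periodic points then form the minimal absorbing set.
A point of period `k` satisfies `V x - r₀ ≤ λ ^ k (V x - r₀)` with `λ ^ k < 1`, so it lies in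
`Λ(x_f, r₀)`. -/

open Set Function Filter Topology

section Absorbing

variable {X : Type*} {w : X → X} {C Λ : Set X}

theorem inter_periodicPts_subset_of_isAbsorbing (h : IsAbsorbing w C Λ) :
    C ∩ periodicPts w ⊆ Λ := by
  rintro x ⟨hxC, k, hk, hx⟩
  obtain ⟨N, hN⟩ := h.2 x hxC
  exact (hx.mul_const N).eq ▸ hN (k * N) (Nat.le_mul_of_pos_left N hk)

theorem minAbsorbing_eq_of_isAbsorbing_inter_periodicPts
    (h : IsAbsorbing w C (C ∩ periodicPts w)) : minAbsorbing w C = C ∩ periodicPts w :=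
  (sInter_subset_of_mem h).antisymm
    (subset_sInter fun _ hΛ => inter_periodicPts_subset_of_isAbsorbing hΛ)

theorem exists_forall_ge_iterate_mem_periodicPts {x : X} {B : Set X} (hB : B.Finite)
    (hxB : ∀ i, w^[i] x ∈ B) : ∃ N, ∀ i ≥ N, w^[i] x ∈ periodicPts w := by
  obtain ⟨a, b, hab, heq⟩ := hB.exists_lt_map_eq_of_forall_mem hxB
  have hper : IsPeriodicPt w (b - a) (w^[a] x) := by
    rw [IsPeriodicPt, IsFixedPt, ← iterate_add_apply, Nat.sub_add_cancel hab.le, heq]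
  refine ⟨a, fun i hi => ?_⟩
  rw [← Nat.sub_add_cancel hi, iterate_add_apply]
  exact mk_mem_periodicPts (Nat.sub_pos_of_lt hab) (hper.apply_iterate _)

theorem isAbsorbing_inter_periodicPts (hw : MapsTo w C C)
    (horbit : ∀ x ∈ C, ∃ B : Set X, B.Finite ∧ ∀ i, w^[i] x ∈ B) :
    IsAbsorbing w C (C ∩ periodicPts w) := by
  refine ⟨inter_subset_left, fun x hx => ?_⟩
  obtain ⟨B, hB, hxB⟩ := horbit x hx
  obtain ⟨N, hN⟩ := exists_forall_ge_iterate_mem_periodicPts hB hxB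
  exact ⟨N, fun i hi => ⟨hw.iterate i hx, hN i hi⟩⟩

end Absorbing

section AffineDecay

variable {X : Type*} {F : X → X} {V : X → ℝ} {lam r : ℝ}

theorem sub_le_pow_mul_sub_of_le_affine (hlam : 0 ≤ lam)
    (hF : ∀ x, V (F x) ≤ (1 - lam) * r + lam * V x) (x : X) (i : ℕ) :
    V (F^[i] x) - r ≤ lam ^ i * (V x - r) := by
  induction i with
  | zero => simp
  | succ i ih =>
    rw [iterate_succ_apply', pow_succ', mul_assoc]
    calc V (F (F^[i] x)) - r ≤ lam * (V (F^[i] x) - r) := by linarith [hF (F^[i] x)]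
      _ ≤ lam * (lam ^ i * (V x - r)) := mul_le_mul_of_nonneg_left ih hlam

theorem iterate_le_max_of_le_affine (hlam : lam ∈ Icc 0 1)
    (hF : ∀ x, V (F x) ≤ (1 - lam) * r + lam * V x) (x : X) (i : ℕ) :
    V (F^[i] x) ≤ max (V x) r := by
  have hdecay := sub_le_pow_mul_sub_of_le_affine hlam.1 hF x i
  have hpow0 : 0 ≤ lam ^ i := pow_nonneg hlam.1 i
  have hpow1 : lam ^ i ≤ 1 := pow_le_one₀ hlam.1 hlam.2
  rcases le_total (V x) r with hle | hle
  · nlinarith [le_max_right (V x) r]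
  · nlinarith [le_max_left (V x) r]

theorem le_of_mem_periodicPts_of_le_affine (hlam : lam ∈ Ico 0 1)
    (hF : ∀ x, V (F x) ≤ (1 - lam) * r + lam * V x) {x : X} (hx : x ∈ periodicPts F) :
    V x ≤ r := by
  obtain ⟨k, hk, hxk⟩ := hx
  have hdecay := sub_le_pow_mul_sub_of_le_affine hlam.1 hF x k
  rw [hxk.eq] at hdecay
  have hpow : lam ^ k < 1 := pow_lt_one₀ hlam.1 hlam.2 hk.ne'
  nlinarith

end AffineDecay

section SeminormFiniteDimensional

variable {E : Type*} [NormedAddCommGroup E] [NormedSpace ℝ E]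

theorem Seminorm.continuous_of_finiteDimensional [FiniteDimensional ℝ E] (p : Seminorm ℝ E) :
    Continuous p := by
  rw [← continuousOn_univ, ← interior_univ]
  exact p.convexOn.continuousOn_interior

theorem Seminorm.exists_pos_mul_norm_le [ProperSpace E] (p : Seminorm ℝ E) (hpc : Continuous p)
    (hp : ∀ x, p x = 0 → x = 0) : ∃ c > 0, ∀ x, c * ‖x‖ ≤ p x := by
  rcases subsingleton_or_nontrivial E with hE | hE
  · exact ⟨1, one_pos, fun x => by simp [Subsingleton.elim x 0]⟩
  obtain ⟨z, hz, hzmin⟩ := (isCompact_sphere (0 : E) 1).exists_isMinOn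
    (NormedSpace.sphere_nonempty.mpr zero_le_one) hpc.continuousOn
  have hz0 : z ≠ 0 := ne_zero_of_mem_unit_sphere ⟨z, hz⟩
  refine ⟨p z, (apply_nonneg p z).lt_of_ne' fun h => hz0 (hp z h), fun x => ?_⟩
  rcases eq_or_ne x 0 with rfl | hx
  · simp
  have hxn : 0 < ‖x‖ := norm_pos_iff.mpr hx
  have hmin : p z ≤ p (‖x‖⁻¹ • x) := hzmin (by simp [norm_smul, hxn.ne'])
  rw [map_smul_eq_mul, norm_inv, norm_norm, inv_mul_eq_div, le_div_iff₀ hxn] at hmin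
  exact hmin

end SeminormFiniteDimensional

section Grid

variable {n : ℕ} {δ : ℝ}

theorem roundPt_mem_Dgrid (x : Fin n → ℝ) : roundPt n δ x ∈ Dgrid n δ :=
  ⟨fun j => ⌊x j / δ + 1 / 2⌋, rfl⟩

theorem abs_roundPt_sub_le (hδ : 0 < δ) (x : Fin n → ℝ) (j : Fin n) :
    |roundPt n δ x j - x j| ≤ δ / 2 := by
  have hlo := Int.floor_le (x j / δ + 1 / 2)
  have hhi := Int.lt_floor_add_one (x j / δ + 1 / 2)
  have hx : x j = δ * (x j / δ) := by field_simp
  rw [abs_le]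
  simp only [roundPt]
  constructor <;> nlinarith

theorem Dgrid_inter_closedBall_finite (hδ : 0 < δ) (x : Fin n → ℝ) (ρ : ℝ) :
    (Dgrid n δ ∩ Metric.closedBall x ρ).Finite := by
  refine ((Finite.pi' fun j => finite_Icc ⌈(x j - ρ) / δ⌉ ⌊(x j + ρ) / δ⌋).image
    fun (m : Fin n → ℤ) j => δ * m j).subset ?_
  rintro _ ⟨⟨m, rfl⟩, hm⟩
  refine ⟨m, fun j => ?_, rfl⟩
  have hj := abs_le.1 ((Real.dist_eq _ _ ▸ dist_le_pi_dist _ x j).trans hm)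
  constructor
  · rw [Int.ceil_le, div_le_iff₀ hδ]
    linarith
  · rw [Int.le_floor, le_div_iff₀ hδ]
    linarith

theorem Dgrid_seminormBall_finite (hδ : 0 < δ) (p : Seminorm ℝ (Fin n → ℝ))
    (hp : ∀ x, p x = 0 → x = 0) (x : Fin n → ℝ) (r : ℝ) :
    {y ∈ Dgrid n δ | p (y - x) ≤ r}.Finite := by
  obtain ⟨c, hc, hcp⟩ := p.exists_pos_mul_norm_le p.continuous_of_finiteDimensional hp
  refine (Dgrid_inter_closedBall_finite hδ x (r / c)).subset fun y hy => ⟨hy.1, ?_⟩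
  rw [Metric.mem_closedBall, dist_eq_norm, le_div_iff₀ hc, mul_comm]
  exact (hcp _).trans hy.2

theorem two_mul_le_cubeDiam (hδ : 0 < δ) (p : Seminorm ℝ (Fin n → ℝ)) {e : Fin n → ℝ}
    (he : ∀ j, |e j| ≤ δ / 2) : 2 * p e ≤ cubeDiam n δ p := by
  -- The cube is half-open, so `±e` need not lie in it, but `±t • e` does for `0 < t < 1`.
  have hscaled : ∀ t ∈ Ioo (0 : ℝ) 1, 2 * t * p e ≤ cubeDiam n δ p := by
    rintro t ⟨ht0, ht1⟩
    have hcube : ∀ s : ℝ, |s| = t → ∀ j, -(δ / 2) ≤ (s • e) j ∧ (s • e) j < δ / 2 := by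
      intro s hs j
      have hlt : |(s • e) j| < δ / 2 := by
        rw [Pi.smul_apply, smul_eq_mul, abs_mul, hs]
        nlinarith [he j, abs_nonneg (e j)]
      exact ⟨(abs_le.1 hlt.le).1, (abs_lt.1 hlt).2⟩
    refine le_csSup ?_ ⟨t • e, (-t) • e, hcube t (abs_of_pos ht0), hcube (-t) (by
      rw [abs_neg, abs_of_pos ht0]), ?_⟩
    · refine ((isCompact_closedBall (0 : Fin n → ℝ) δ).bddAbove_image
        p.continuous_of_finiteDimensional.continuousOn).mono ?_
      rintro _ ⟨x, y, hx, hy, rfl⟩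
      refine ⟨x - y, mem_closedBall_zero_iff.2 ((pi_norm_le_iff_of_nonneg hδ.le).2 fun j => ?_),
        rfl⟩
      rw [Pi.sub_apply, Real.norm_eq_abs, abs_le]
      constructor <;> linarith [hx j, hy j]
    · rw [← sub_smul, map_smul_eq_mul, sub_neg_eq_add, Real.norm_eq_abs,
        abs_of_pos (by linarith)]
      ring
  have hlim : Tendsto (fun t : ℝ => 2 * t * p e) (𝓝[<] 1) (𝓝 (2 * 1 * p e)) :=
    ((continuous_const.mul continuous_id).mul continuous_const).tendsto 1 |>.mono_left
      nhdsWithin_le_nhds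
  rw [mul_one] at hlim
  exact le_of_tendsto hlim (eventually_of_mem (Ioo_mem_nhdsLT one_pos) hscaled)

theorem roundPt_sub_le_cubeDiam (hδ : 0 < δ) (p : Seminorm ℝ (Fin n → ℝ)) (x : Fin n → ℝ) :
    p (roundPt n δ x - x) ≤ cubeDiam n δ p / 2 := by
  have := two_mul_le_cubeDiam hδ p (e := roundPt n δ x - x) (abs_roundPt_sub_le hδ x)
  linarith

theorem roundMap_sub_le (hδ : 0 < δ) (p : Seminorm ℝ (Fin n → ℝ)) {w : (Fin n → ℝ) → Fin n → ℝ}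
    {lam : ℝ} (hw : ∀ x y, p (w x - w y) ≤ lam * p (x - y)) {xf : Fin n → ℝ} (hxf : w xf = xf)
    (x : Fin n → ℝ) : p (roundMap n δ w x - xf) ≤ cubeDiam n δ p / 2 + lam * p (x - xf) :=
  calc p (roundMap n δ w x - xf) = p ((roundPt n δ (w x) - w x) + (w x - w xf)) := by
        rw [hxf, sub_add_sub_cancel]
        rfl
    _ ≤ p (roundPt n δ (w x) - w x) + p (w x - w xf) := map_add_le_add p _ _
    _ ≤ cubeDiam n δ p / 2 + lam * p (x - xf) :=
        add_le_add (roundPt_sub_le_cubeDiam hδ p _) (hw _ _)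

end Grid

theorem stmt_5_general (n : ℕ) (δ : ℝ) (hδ : 0 < δ)
    (nrm : (Fin n → ℝ) → ℝ)
    (hnrm_eq : ∀ x, nrm x = 0 ↔ x = 0)
    (hnrm_smul : ∀ (a : ℝ) (x : Fin n → ℝ), nrm (a • x) = |a| * nrm x)
    (hnrm_add : ∀ x y : Fin n → ℝ, nrm (x + y) ≤ nrm x + nrm y)
    (w : (Fin n → ℝ) → (Fin n → ℝ))
    (lam : ℝ) (hlam : lam ∈ Set.Ico (0 : ℝ) 1)
    (hcontr : ∀ x y : Fin n → ℝ, nrm (w x - w y) ≤ lam * nrm (x - y))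
    (xf : Fin n → ℝ) (hxf : w xf = xf)
    (θ : ℝ) (hθ : θ = cubeDiam n δ nrm / 2) :
    IsAbsorbing (roundMap n δ w) (Dgrid n δ)
        (minAbsorbing (roundMap n δ w) (Dgrid n δ)) ∧
      (minAbsorbing (roundMap n δ w) (Dgrid n δ)).Finite ∧
      (minAbsorbing (roundMap n δ w) (Dgrid n δ)).encard ≤
        {y ∈ Dgrid n δ | nrm (y - xf) ≤ θ * (1 - lam)⁻¹}.encard := by
  let p : Seminorm ℝ (Fin n → ℝ) :=
    Seminorm.of nrm hnrm_add fun a x => by rw [hnrm_smul, Real.norm_eq_abs]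
  have hp : ∀ x, p x = 0 → x = 0 := fun x => (hnrm_eq x).1
  set F := roundMap n δ w
  set r := θ * (1 - lam)⁻¹
  have hθr : (1 - lam) * r = θ := by
    simp only [r]
    field_simp [(sub_pos.2 hlam.2).ne']
  have hstep : ∀ x, nrm (F x - xf) ≤ (1 - lam) * r + lam * nrm (x - xf) := fun x =>
    hθr ▸ hθ ▸ roundMap_sub_le hδ p hcontr hxf x
  have hmaps : MapsTo F (Dgrid n δ) (Dgrid n δ) := fun _ _ => roundPt_mem_Dgrid _
  have hP : IsAbsorbing F (Dgrid n δ) (Dgrid n δ ∩ periodicPts F) :=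
    isAbsorbing_inter_periodicPts hmaps fun x hx =>
      ⟨_, Dgrid_seminormBall_finite hδ p hp xf (max (nrm (x - xf)) r), fun i =>
        ⟨hmaps.iterate i hx,
          iterate_le_max_of_le_affine (V := fun y => nrm (y - xf)) (Ico_subset_Icc_self hlam)
            hstep x i⟩⟩
  have hball : Dgrid n δ ∩ periodicPts F ⊆ {y ∈ Dgrid n δ | nrm (y - xf) ≤ r} := fun y hy =>
    ⟨hy.1, le_of_mem_periodicPts_of_le_affine (V := fun y => nrm (y - xf)) hlam hstep hy.2⟩
  rw [minAbsorbing_eq_of_isAbsorbing_inter_periodicPts hP]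
  exact ⟨hP, (Dgrid_seminormBall_finite hδ p hp xf r).subset hball, encard_mono hball⟩

/-- for the δ-roundoff `w̃` of a contraction `w` (factor `λ ∈ [0,1)`,
fixed point `x_f`), the minimal absorbing set `M[w̃]` in the whole grid `D^n(δ)`
exists, is finite, and its cardinality is at most that of
`Λ(x_f, r₀) = {ỹ ∈ D^n(δ) : d(ỹ, x_f) ≤ θ(1-λ)⁻¹}`. -/
theorem stmt_5 (n : ℕ) (hn : 1 ≤ n) (δ : ℝ) (hδ : 0 < δ)
    (nrm : (Fin n → ℝ) → ℝ)
    (hnrm_eq : ∀ x, nrm x = 0 ↔ x = 0)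
    (hnrm_smul : ∀ (a : ℝ) (x : Fin n → ℝ), nrm (a • x) = |a| * nrm x)
    (hnrm_add : ∀ x y : Fin n → ℝ, nrm (x + y) ≤ nrm x + nrm y)
    (w : (Fin n → ℝ) → (Fin n → ℝ))
    (lam : ℝ) (hlam : lam ∈ Set.Ico (0 : ℝ) 1)
    (hcontr : ∀ x y : Fin n → ℝ, nrm (w x - w y) ≤ lam * nrm (x - y))
    (xf : Fin n → ℝ) (hxf : w xf = xf)
    (θ : ℝ) (hθ : θ = cubeDiam n δ nrm / 2) :
    IsAbsorbing (roundMap n δ w) (Dgrid n δ)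
        (minAbsorbing (roundMap n δ w) (Dgrid n δ)) ∧
      (minAbsorbing (roundMap n δ w) (Dgrid n δ)).Finite ∧
      (minAbsorbing (roundMap n δ w) (Dgrid n δ)).encard ≤
        {y ∈ Dgrid n δ | nrm (y - xf) ≤ θ * (1 - lam)⁻¹}.encard :=
  stmt_5_general n δ hδ nrm hnrm_eq hnrm_smul hnrm_add w lam hlam hcontr xf hxf θ hθ
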